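/- Let p be a prime with p ≠ 3 such that p divides ab. Then the ideal generated by p in O_Γ factors as pO_Γ = P³ for a prime ideal P of O_Γ with absolute norm N(P) = p. -/
import Mathlib
open NumberField

lemma key_lemma (K : Type) [Field K] [NumberField K]
    (hdeg : Module.finrank ℚ K = 3) (θ : 𝓞 K) (m p : ℕ) (hp : p.Prime)
    (hm : θ ^ 3 = (m : 𝓞 K)) (h1 : p ∣ m) (h2 : ¬ (p ^ 2 ∣ m)) :
    ∃ P : Ideal (𝓞 K), P.IsPrime ∧ Ideal.span {(p : 𝓞 K)} = P ^ 3 ∧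
      Ideal.absNorm P = p := by
  obtain ⟨m', rfl⟩ := h1
  have hpm' : ¬ p ∣ m' := fun h => h2 (by rw [pow_two]; exact mul_dvd_mul_left p h)
  set S : Set (𝓞 K) := {(p : 𝓞 K), θ} with hS
  set P : Ideal (𝓞 K) := Ideal.span S with hPdef
  have hpP : (p : 𝓞 K) ∈ P := Ideal.subset_span (by left; rfl)
  have hθP : θ ∈ P := Ideal.subset_span (by right; rfl)
  -- Bezout
  have hco : IsCoprime ((p : ℤ) ^ 2) ((m' : ℤ)) := by
    have : Nat.Coprime (p ^ 2) m' := Nat.Coprime.pow_left 2 (hp.coprime_iff_not_dvd.2 hpm')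
    exact_mod_cast (Nat.isCoprime_iff_coprime.2 this)
  obtain ⟨u, v, huv⟩ := hco
  have hbez : u * (p : ℤ) ^ 3 + v * ((p : ℤ) * (m' : ℤ)) = (p : ℤ) := by
    linear_combination (p : ℤ) * huv
  have hbezK : (u : 𝓞 K) * (p : 𝓞 K) ^ 3 + (v : 𝓞 K) * ((p * m' : ℕ) : 𝓞 K)
      = (p : 𝓞 K) := by
    have := congrArg (fun z : ℤ => (z : 𝓞 K)) hbez
    push_cast at this ⊢
    exact this
  have hspan : Ideal.span {(p : 𝓞 K)} = P ^ 3 := by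
    apply le_antisymm
    · rw [Ideal.span_singleton_le_iff_mem]
      rw [← hbezK]
      refine Ideal.add_mem _ (Ideal.mul_mem_left _ _ (Ideal.pow_mem_pow hpP 3)) ?_
      refine Ideal.mul_mem_left _ _ ?_
      rw [← hm]
      exact Ideal.pow_mem_pow hθP 3
    · rw [hPdef, pow_succ, sq, Ideal.span_mul_span', Ideal.span_mul_span',
        Ideal.span_le]
      rintro _ ⟨_, ⟨x, hx, y, hy, rfl⟩, z, hz, rfl⟩
      have hθ3 : (p : 𝓞 K) ∣ θ * θ * θ := by
        rw [show θ * θ * θ = θ ^ 3 by ring, hm]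
        push_cast
        exact dvd_mul_right _ _
      rcases hx with rfl | rfl <;> rcases hy with rfl | rfl <;>
        rcases hz with rfl | rfl <;> apply Ideal.mem_span_singleton.2
      · exact dvd_mul_of_dvd_left (dvd_mul_of_dvd_left dvd_rfl _) _
      · exact dvd_mul_of_dvd_left (dvd_mul_of_dvd_left dvd_rfl _) _
      · exact dvd_mul_of_dvd_left (dvd_mul_of_dvd_left dvd_rfl _) _
      · exact dvd_mul_of_dvd_left (dvd_mul_of_dvd_left dvd_rfl _) _
      · exact dvd_mul_of_dvd_left (dvd_mul_of_dvd_right dvd_rfl _) _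
      · exact dvd_mul_of_dvd_left (dvd_mul_of_dvd_right dvd_rfl _) _
      · exact dvd_mul_left _ _
      · exact hθ3
  have hnorm : Ideal.absNorm (Ideal.span {(p : 𝓞 K)}) = p ^ 3 := by
    rw [Ideal.absNorm_span_singleton]
    have hcast : ((p : 𝓞 K)) = algebraMap ℤ (𝓞 K) (p : ℤ) := by push_cast; rfl
    rw [hcast, Algebra.norm_algebraMap_of_basis (Module.Free.chooseBasis ℤ (𝓞 K))]
    have hc : Fintype.card (Module.Free.ChooseBasisIndex ℤ (𝓞 K)) = 3 := by
      rw [← Module.finrank_eq_card_chooseBasisIndex, NumberField.RingOfIntegers.rank, hdeg]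
    rw [hc]
    simp [Int.natAbs_pow]
  have hNP : Ideal.absNorm P ^ 3 = p ^ 3 := by
    rw [← map_pow, ← hspan, hnorm]
  have hNPp : Ideal.absNorm P = p := Nat.pow_left_injective (by norm_num) hNP
  exact ⟨P, Ideal.isPrime_of_irreducible_absNorm (by rw [hNPp]; exact hp.prime.irreducible),
    hspan, hNPp⟩

theorem stmt_0 (a b d : ℕ) (ha : Squarefree a) (hb : Squarefree b)
    (hab : Nat.Coprime a b) (hd : d = a * b ^ 2) (hd1 : 1 < d)
    (K : Type) [Field K] [NumberField K] (γ : K)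
    (hγ : γ ^ 3 = (d : K)) (hKγ : Algebra.adjoin ℚ {γ} = ⊤)
    (hdeg : Module.finrank ℚ K = 3)
    (p : ℕ) (hp : p.Prime) (hp3 : p ≠ 3) (hpab : p ∣ a * b) :
    ∃ P : Ideal (𝓞 K), P.IsPrime ∧ Ideal.span {(p : 𝓞 K)} = P ^ 3 ∧
      Ideal.absNorm P = p := by
  have hb0 : b ≠ 0 := hb.ne_zero
  have ha0 : a ≠ 0 := ha.ne_zero
  rcases (Nat.Prime.dvd_mul hp).1 hpab with hpa | hpb
  · -- p ∣ a, use θ = γ, m = d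
    have hpb' : ¬ p ∣ b := fun h => hp.ne_one (Nat.dvd_one.mp (hab ▸ Nat.dvd_gcd hpa h))
    have hint : IsIntegral ℤ γ := by
      refine ⟨Polynomial.X ^ 3 - Polynomial.C (d : ℤ), ?_, ?_⟩
      · exact Polynomial.monic_X_pow_sub_C _ (by norm_num)
      · simp [hγ]
    refine key_lemma K hdeg ⟨γ, hint⟩ d p hp ?_ (hd ▸ Dvd.dvd.mul_right hpa _) ?_
    · ext
      push_cast
      exact hγ
    · intro h
      rw [hd] at h
      have : p ^ 2 ∣ a := (Nat.Coprime.pow_left 2 (Nat.Coprime.pow_right 2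
        (hp.coprime_iff_not_dvd.2 hpb'))).dvd_of_dvd_mul_right h
      exact hp.not_isUnit (ha p (by rwa [← pow_two]))
  · -- p ∣ b, use θ = γ²/b, m = a² * b
    have hpa' : ¬ p ∣ a := fun h => hp.ne_one (Nat.dvd_one.mp (hab ▸ Nat.dvd_gcd h hpb))
    have hbK : (b : K) ≠ 0 := Nat.cast_ne_zero.2 hb0
    have hθ3 : (γ ^ 2 / (b : K)) ^ 3 = ((a ^ 2 * b : ℕ) : K) := by
      have h6 : γ ^ 6 = ((a : K) ^ 2 * (b : K) ^ 4) := by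
        have : γ ^ 6 = ((d : K)) ^ 2 := by rw [← hγ]; ring
        rw [this, hd]
        push_cast
        ring
      field_simp
      push_cast
      linear_combination h6
    have hint : IsIntegral ℤ (γ ^ 2 / (b : K)) := by
      refine ⟨Polynomial.X ^ 3 - Polynomial.C ((a ^ 2 * b : ℕ) : ℤ), ?_, ?_⟩
      · exact Polynomial.monic_X_pow_sub_C _ (by norm_num)
      · simp only [Polynomial.eval₂_sub, Polynomial.eval₂_X_pow, Polynomial.eval₂_C, hθ3]
        push_cast
        ring
    refine key_lemma K hdeg ⟨γ ^ 2 / (b : K), hint⟩ (a ^ 2 * b) p hp ?_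
      (Dvd.dvd.mul_left hpb _) ?_
    · ext
      push_cast
      exact hθ3.trans (by push_cast; ring)
    · intro h
      have : p ^ 2 ∣ b := (Nat.Coprime.pow_left 2 (Nat.Coprime.pow_right 2
        (hp.coprime_iff_not_dvd.2 hpa'))).dvd_of_dvd_mul_left h
      exact hp.not_isUnit (hb p (by rwa [← pow_two]))
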